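/- arXiv:2302.04357 — 2 statements merged into one kernel-verified Lean document; each statement's English description precedes it below -/
import Mathlib

section
/- Let H_d' = {χ_{[n]} : 1 ≤ n ≤ 2^d} ∪ {χ_E} over domain ℕ, where E = {2^d + i : 1 ≤ i ≤ d−1} and 2 < d < ∞. Then Ldim(H_d') = d, yet there exists an online learner A with mistake bound M_A(H_d') = d (so A is optimal) that makes d−1 mistakes on the H_d'-realizable sample ((x,1))_{x∈E}, while any anytime optimal learner makes at most 1 mistake on that sample. -/
open Classical

variable {X : Type*}

/-- A hypothesis `h` is consistent with a sample `S`. -/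
def Consistent (h : X → Bool) (S : List (X × Bool)) : Prop :=
  ∀ p ∈ S, h p.1 = p.2

/-- A sample is realizable by the class `H`. -/
def Realizable (H : Set (X → Bool)) (S : List (X × Bool)) : Prop :=
  ∃ h ∈ H, Consistent h S

/-- The version space `H_S`. -/
def VS (H : Set (X → Bool)) (S : List (X × Bool)) : Set (X → Bool) :=
  {h ∈ H | Consistent h S}

/-- `H^{(x,r)}`. -/
def Restrict (H : Set (X → Bool)) (x : X) (r : Bool) : Set (X → Bool) :=
  {h ∈ H | h x = r}

/-- `Shatters H d` holds iff there is a complete binary tree of depth `d` shattered by `H`,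
equivalently stated recursively. -/
def Shatters (H : Set (X → Bool)) : ℕ → Prop
  | 0 => H.Nonempty
  | d + 1 => ∃ x : X, Shatters (Restrict H x false) d ∧ Shatters (Restrict H x true) d

/-- Littlestone dimension, with `Ldim ∅ = ⊥` (playing the role of `-1`). -/
noncomputable def Ldim (H : Set (X → Bool)) : WithBot ℕ∞ :=
  ⨆ d ∈ {d : ℕ | Shatters H d}, ((d : ℕ∞) : WithBot ℕ∞)

def MistakesFrom (A : List (X × Bool) → X → Bool) :
    List (X × Bool) → List (X × Bool) → ℕ
  | _, [] => 0
  | pre, p :: rest =>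
      (if A pre p.1 ≠ p.2 then 1 else 0) + MistakesFrom A (pre ++ [p]) rest

/-- Number of mistakes that the online learner `A` makes on the sample `S`. -/
def Mistakes (A : List (X × Bool) → X → Bool) (S : List (X × Bool)) : ℕ :=
  MistakesFrom A [] S

/-- Mistake bound of `A` with respect to `H`. -/
noncomputable def MB (A : List (X × Bool) → X → Bool) (H : Set (X → Bool)) : ℕ∞ :=
  ⨆ S ∈ {S | Realizable H S}, (Mistakes A S : ℕ∞)

/-- `A` is an optimal online learner for `H`. -/
def IsOptimal (A : List (X × Bool) → X → Bool) (H : Set (X → Bool)) : Prop :=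
  MB A H = ⨅ B : List (X × Bool) → X → Bool, MB B H

/-- Post-`S` mistake bound of `A` w.r.t. `H`. -/
noncomputable def PostMB (A : List (X × Bool) → X → Bool) (H : Set (X → Bool))
    (S : List (X × Bool)) : ℕ∞ :=
  ⨆ S' ∈ {S' | Realizable H (S ++ S')}, ((Mistakes A (S ++ S') - Mistakes A S : ℕ) : ℕ∞)

/-- Optimal post-`S` mistake bound. -/
noncomputable def OptPostMB (H : Set (X → Bool)) (S : List (X × Bool)) : ℕ∞ :=
  ⨅ A : List (X × Bool) → X → Bool, PostMB A H S

/-- `A` is anytime optimal for `H`. -/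
def AnytimeOptimal (A : List (X × Bool) → X → Bool) (H : Set (X → Bool)) : Prop :=
  ∀ S, Realizable H S → PostMB A H S = OptPostMB H S

/-- `χ_{[n]}`. -/
def chiInterval (n : ℕ) : ℕ → Bool := fun m => decide (1 ≤ m ∧ m ≤ n)

/-- `χ_E` where `E = {2^d + i : 1 ≤ i ≤ d-1}`. -/
def chiE (d : ℕ) : ℕ → Bool := fun m => decide (2 ^ d + 1 ≤ m ∧ m ≤ 2 ^ d + (d - 1))

/-- The class `H_d' = {χ_{[n]} : 1 ≤ n ≤ 2^d} ∪ {χ_E}`. -/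
def Hd' (d : ℕ) : Set (ℕ → Bool) :=
  {f | ∃ n : ℕ, 1 ≤ n ∧ n ≤ 2 ^ d ∧ f = chiInterval n} ∪ {chiE d}

/-- The sample `((x,1))_{x ∈ E}`. -/
def SE (d : ℕ) : List (ℕ × Bool) :=
  (List.range (d - 1)).map fun i => (2 ^ d + i + 1, true)

/-!
The thresholds `χ_[n]` shatter a complete tree of depth `d` (binary search), while a class that
shatters depth `k` has at least `2 ^ k` members; since `|H_d'| ≤ 2 ^ d + 1`, this pins
`Ldim H_d' = d`, and the same tree lets an adversary force `d` mistakes on every learner.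

The learner runs halving, which pays for each mistake by halving the version space, until the
first positive example beyond `2 ^ d`. That example identifies `χ_E`, after which the learner
deliberately errs on the remaining points of `E`: at most `d - 2` more times if the example was
the first point of `E`, never otherwise. So it makes at most `d` mistakes, and `d - 1` on `SE d`.
An anytime optimal learner instead makes no mistake after the first point of `E`, since
predicting `χ_E` from then on makes none.
-/

section OnlineLearning

variable {H : Set (X → Bool)} {A : List (X × Bool) → X → Bool}

theorem consistent_append {h : X → Bool} {S T : List (X × Bool)} :
    Consistent h (S ++ T) ↔ Consistent h S ∧ Consistent h T := by
  simp only [Consistent, List.mem_append, or_imp, forall_and]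

theorem Realizable.of_append {S T : List (X × Bool)} (hr : Realizable H (S ++ T)) :
    Realizable H S :=
  let ⟨h, hH, hc⟩ := hr
  ⟨h, hH, (consistent_append.1 hc).1⟩

theorem realizable_iff_VS_nonempty {S : List (X × Bool)} :
    Realizable H S ↔ (VS H S).Nonempty := Iff.rfl

theorem VS_nil : VS H [] = H := by
  ext h
  simp [VS, Consistent]

theorem VS_append_subset (S T : List (X × Bool)) : VS H (S ++ T) ⊆ VS H S :=
  fun _ hh => ⟨hh.1, (consistent_append.1 hh.2).1⟩

theorem VS_append_singleton (S : List (X × Bool)) (p : X × Bool) :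
    VS H (S ++ [p]) = Restrict (VS H S) p.1 p.2 := by
  ext h
  simp [VS, Restrict, Consistent, or_imp, forall_and, and_assoc]

theorem ncard_restrict_false_add_true {V : Set (X → Bool)} (hV : V.Finite) (x : X) :
    (Restrict V x false).ncard + (Restrict V x true).ncard = V.ncard := by
  have hdisj : Disjoint (Restrict V x false) (Restrict V x true) :=
    Set.disjoint_left.2 fun h hf ht => by simp_all [Restrict]
  rw [← Set.ncard_union_eq hdisj (hV.subset fun _ hh => hh.1) (hV.subset fun _ hh => hh.1)]
  congr 1
  ext h
  cases hx : h x <;> simp [Restrict, hx]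

theorem mistakesFrom_le_length (pre : List (X × Bool)) :
    ∀ S : List (X × Bool), MistakesFrom A pre S ≤ S.length := by
  intro S
  induction S generalizing pre with
  | nil => exact le_rfl
  | cons p rest ih =>
    have := ih (pre ++ [p])
    simp only [MistakesFrom, List.length_cons]
    split <;> omega

theorem mistakesFrom_append (S T pre : List (X × Bool)) :
    MistakesFrom A pre (S ++ T) = MistakesFrom A pre S + MistakesFrom A (pre ++ S) T := by
  induction S generalizing pre with
  | nil => simp [MistakesFrom]
  | cons p rest ih =>
    simp only [List.cons_append, MistakesFrom, ih, List.append_assoc, List.nil_append]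
    omega

theorem mistakesFrom_eq_length (pre S : List (X × Bool))
    (hwrong : ∀ k (hk : k < S.length), A (pre ++ S.take k) S[k].1 ≠ S[k].2) :
    MistakesFrom A pre S = S.length := by
  induction S generalizing pre with
  | nil => rfl
  | cons p rest ih =>
    have hp : A pre p.1 ≠ p.2 := by
      have h0 := hwrong 0 (by simp)
      rwa [List.take_zero, List.append_nil] at h0
    have hrest := ih (pre ++ [p]) fun k hk => by
      have hk1 := hwrong (k + 1) (by simpa using hk)
      rwa [List.take_succ_cons, ← List.singleton_append, ← List.append_assoc] at hk1
    simp only [MistakesFrom, if_pos hp, hrest, List.length_cons]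
    omega

theorem mistakesFrom_const_eq_zero {g : X → Bool} (pre : List (X × Bool)) {S : List (X × Bool)}
    (hg : Consistent g S) : MistakesFrom (fun _ => g) pre S = 0 := by
  induction S generalizing pre with
  | nil => rfl
  | cons p rest ih =>
    have hc : Consistent g [p] ∧ Consistent g rest := consistent_append.1 hg
    simp [MistakesFrom, hc.1 p (by simp), ih (pre ++ [p]) hc.2]

theorem mistakesFrom_add_le_of_potential (Φ : List (X × Bool) → ℕ)
    (hΦ : ∀ pre p, Realizable H (pre ++ [p]) →
      (if A pre p.1 ≠ p.2 then 1 else 0) + Φ (pre ++ [p]) ≤ Φ pre)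
    (S pre : List (X × Bool)) (hr : Realizable H (pre ++ S)) :
    MistakesFrom A pre S + Φ (pre ++ S) ≤ Φ pre := by
  induction S generalizing pre with
  | nil => simp [MistakesFrom]
  | cons p rest ih =>
    have hrest := ih (pre ++ [p]) (by simpa using hr)
    have hstep := hΦ pre p (Realizable.of_append (T := rest) (by simpa using hr))
    simp only [MistakesFrom, List.append_assoc, List.singleton_append] at hrest ⊢
    omega

theorem le_MB {S : List (X × Bool)} (hS : Realizable H S) : (Mistakes A S : ℕ∞) ≤ MB A H :=
  le_iSup₂ (f := fun S (_ : S ∈ {S | Realizable H S}) => (Mistakes A S : ℕ∞)) S hS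

theorem MB_le {n : ℕ} (h : ∀ S, Realizable H S → Mistakes A S ≤ n) : MB A H ≤ n :=
  iSup₂_le fun S hS => by exact_mod_cast h S hS

theorem OptPostMB_eq_zero_of_VS_subset {S : List (X × Bool)} {g : X → Bool}
    (hg : VS H S ⊆ {g}) : OptPostMB H S = 0 := by
  refine le_antisymm (iInf_le_of_le (fun _ => g) (iSup₂_le fun S' hS' => ?_)) bot_le
  obtain ⟨h, hh⟩ := realizable_iff_VS_nonempty.1 hS'
  have hhg : h = g := hg (VS_append_subset S S' hh)
  rw [Mistakes, Mistakes, mistakesFrom_const_eq_zero [] (hhg ▸ hh.2),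
    mistakesFrom_const_eq_zero [] (consistent_append.1 (hhg ▸ hh.2)).1]
  simp

theorem mistakes_append_eq_of_PostMB_eq_zero {S S' : List (X × Bool)}
    (h0 : PostMB A H S = 0) (hr : Realizable H (S ++ S')) :
    Mistakes A (S ++ S') = Mistakes A S := by
  have hle : ((Mistakes A (S ++ S') - Mistakes A S : ℕ) : ℕ∞) ≤ 0 :=
    h0 ▸ le_iSup₂ (f := fun S' (_ : S' ∈ {S' | Realizable H (S ++ S')}) =>
      ((Mistakes A (S ++ S') - Mistakes A S : ℕ) : ℕ∞)) S' hr
  have hsplit : Mistakes A (S ++ S') = Mistakes A S + MistakesFrom A S S' := by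
    simp [Mistakes, mistakesFrom_append]
  have : Mistakes A (S ++ S') - Mistakes A S = 0 := by exact_mod_cast nonpos_iff_eq_zero.1 hle
  omega

end OnlineLearning

section Shattering

variable {H : Set (X → Bool)}

theorem Shatters.mono {k : ℕ} {H' : Set (X → Bool)} (hHH' : H ⊆ H') (hk : Shatters H k) :
    Shatters H' k := by
  induction k generalizing H H' with
  | zero => exact hk.mono hHH'
  | succ k ih =>
    obtain ⟨x, hf, ht⟩ := hk
    have hrestrict (r : Bool) : Restrict H x r ⊆ Restrict H' x r := fun _ hh => ⟨hHH' hh.1, hh.2⟩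
    exact ⟨x, ih (hrestrict false) hf, ih (hrestrict true) ht⟩

theorem Shatters.two_pow_le_ncard {k : ℕ} (hk : Shatters H k) (hH : H.Finite) :
    2 ^ k ≤ H.ncard := by
  induction k generalizing H with
  | zero => exact (Set.ncard_pos hH).2 hk
  | succ k ih =>
    obtain ⟨x, hf, ht⟩ := hk
    have hfalse := ih hf (hH.subset fun _ hh => hh.1)
    have htrue := ih ht (hH.subset fun _ hh => hh.1)
    rw [← ncard_restrict_false_add_true hH x, pow_succ]
    omega

theorem Shatters.le_log_ncard {k : ℕ} (hk : Shatters H k) (hH : H.Finite) :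
    k ≤ Nat.log 2 H.ncard :=
  Nat.le_log_of_pow_le one_lt_two (hk.two_pow_le_ncard hH)

/-- The adversary answers against the learner's prediction, staying inside the shattered
subtree. -/
theorem Shatters.exists_mistakesFrom_eq (A : List (X × Bool) → X → Bool) {k : ℕ}
    (hk : Shatters H k) (pre : List (X × Bool)) :
    ∃ S, Realizable H S ∧ MistakesFrom A pre S = k := by
  induction k generalizing H pre with
  | zero =>
    obtain ⟨h, hh⟩ := hk
    exact ⟨[], ⟨h, hh, by simp [Consistent]⟩, rfl⟩
  | succ k ih =>
    obtain ⟨x, hk'⟩ := hk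
    set r := !A pre x
    have hr : Shatters (Restrict H x r) k := by cases h : A pre x <;> simp_all [r]
    obtain ⟨S, ⟨h, ⟨hH, hx⟩, hc⟩, hS⟩ := ih hr (pre ++ [(x, r)])
    refine ⟨(x, r) :: S, ⟨h, hH, ?_⟩, ?_⟩
    · simpa [Consistent, hx] using hc
    · simp only [MistakesFrom, hS, r, ne_eq, Bool.eq_not_self, not_false_eq_true, ↓reduceIte]
      omega

theorem le_MB_of_shatters (A : List (X × Bool) → X → Bool) {k : ℕ} (hk : Shatters H k) :
    (k : ℕ∞) ≤ MB A H := by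
  obtain ⟨S, hS, hm⟩ := hk.exists_mistakesFrom_eq A []
  exact hm ▸ le_MB hS

theorem Ldim_eq_of_shatters {d : ℕ} (hd : Shatters H d) (hle : ∀ k, Shatters H k → k ≤ d) :
    Ldim H = ((d : ℕ∞) : WithBot ℕ∞) :=
  le_antisymm (iSup₂_le fun k hk => by exact_mod_cast hle k hk)
    (le_iSup₂ (f := fun (k : ℕ) (_ : k ∈ {k | Shatters H k}) => ((k : ℕ∞) : WithBot ℕ∞))
      d hd)

end Shattering

section Halving

variable {H : Set (X → Bool)} {S : List (X × Bool)}

noncomputable def halving (H : Set (X → Bool)) (S : List (X × Bool)) (x : X) : Bool :=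
  decide ((Restrict (VS H S) x false).ncard < (Restrict (VS H S) x true).ncard)

theorem halving_eq_of_VS_eq_singleton {g : X → Bool} (hg : VS H S = {g}) (x : X) :
    halving H S x = g x := by
  have hrestrict : ∀ b, Restrict {g} x b = if g x = b then {g} else ∅ := by
    intro b
    ext h
    split_ifs with hb <;> simp only [Restrict, Set.mem_singleton_iff] <;>
      grind
  cases hx : g x <;> simp [halving, hg, hrestrict, hx]

theorem halving_mistake_add_log_le (hH : H.Finite) {p : X × Bool}
    (hr : Realizable H (S ++ [p])) :
    (if halving H S p.1 ≠ p.2 then 1 else 0) + Nat.log 2 (VS H (S ++ [p])).ncard ≤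
      Nat.log 2 (VS H S).ncard := by
  have hfin : (VS H S).Finite := hH.subset fun _ hh => hh.1
  split_ifs with hm
  · have hne : (VS H (S ++ [p])).ncard ≠ 0 :=
      (Set.ncard_pos (hfin.subset (VS_append_subset S [p]))).2 hr |>.ne'
    have hhalf : (VS H (S ++ [p])).ncard * 2 ≤ (VS H S).ncard := by
      have hsum := ncard_restrict_false_add_true hfin p.1
      rw [VS_append_singleton]
      cases hp : p.2 <;> simp_all [halving] <;> omega
    rw [add_comm, ← Nat.log_mul_base one_lt_two hne]
    exact Nat.log_mono_right hhalf
  · exact (zero_add _).trans_le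
      (Nat.log_mono_right (Set.ncard_le_ncard (VS_append_subset S [p]) hfin))

end Halving

section IntervalClass

variable {d : ℕ}

theorem Hd'_eq (d : ℕ) : Hd' d = insert (chiE d) (chiInterval '' Set.Icc 1 (2 ^ d)) := by
  ext f
  simp only [Hd', Set.mem_union, Set.mem_ofPred_eq, Set.mem_singleton_iff, Set.mem_insert_iff,
    Set.mem_image, Set.mem_Icc]
  grind

theorem Hd'_finite (d : ℕ) : (Hd' d).Finite := by
  rw [Hd'_eq]
  exact ((Set.finite_Icc _ _).image _).insert _

theorem ncard_Hd'_le (d : ℕ) : (Hd' d).ncard ≤ 2 ^ d + 1 := by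
  rw [Hd'_eq]
  calc _ ≤ (chiInterval '' Set.Icc 1 (2 ^ d)).ncard + 1 := Set.ncard_insert_le _ _
    _ ≤ (Set.Icc 1 (2 ^ d)).ncard + 1 := by gcongr; exact Set.ncard_image_le (Set.finite_Icc _ _)
    _ = 2 ^ d + 1 := by simp [Set.ncard_eq_toFinset_card']

/-- Binary search: the split point `a + 2 ^ k` halves the thresholds in `[a, a + 2 ^ (k+1))`. -/
theorem shatters_chiInterval_image_Ico (a k : ℕ) :
    Shatters (chiInterval '' Set.Ico a (a + 2 ^ k)) k := by
  induction k generalizing a with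
  | zero => exact ⟨chiInterval a, a, by simp, rfl⟩
  | succ k ih =>
    refine ⟨a + 2 ^ k, (ih a).mono ?_, (ih (a + 2 ^ k)).mono ?_⟩ <;>
    · rintro _ ⟨n, hn, rfl⟩
      simp only [Set.mem_Ico] at hn
      refine ⟨⟨n, Set.mem_Ico.2 ⟨by omega, by rw [pow_succ]; omega⟩, rfl⟩, ?_⟩
      simp only [chiInterval, decide_eq_true_eq, decide_eq_false_iff_not]
      omega

theorem shatters_Hd' (d : ℕ) : Shatters (Hd' d) d := by
  refine (shatters_chiInterval_image_Ico 1 d).mono ?_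
  rintro _ ⟨n, hn, rfl⟩
  simp only [Set.mem_Ico] at hn
  exact Or.inl ⟨n, hn.1, by omega, rfl⟩

theorem log_ncard_Hd' (hd : 1 ≤ d) : Nat.log 2 (Hd' d).ncard = d := by
  refine le_antisymm ?_ ((shatters_Hd' d).le_log_ncard (Hd'_finite d))
  have hlt : (Hd' d).ncard < 2 ^ (d + 1) := by
    have : 2 ≤ 2 ^ d := Nat.le_self_pow (by omega) 2
    have := ncard_Hd'_le d
    rw [pow_succ]
    omega
  exact Nat.lt_succ_iff.1 (Nat.log_lt_of_lt_pow' (by omega) hlt)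

theorem Ldim_Hd' (hd : 1 ≤ d) : Ldim (Hd' d) = ((d : ℕ∞) : WithBot ℕ∞) :=
  Ldim_eq_of_shatters (shatters_Hd' d) fun _ hk =>
    log_ncard_Hd' hd ▸ hk.le_log_ncard (Hd'_finite d)

theorem eq_chiE_of_mem_Hd' {h : ℕ → Bool} (hh : h ∈ Hd' d) {x : ℕ} (hx : 2 ^ d < x)
    (hhx : h x = true) : h = chiE d := by
  rcases hh with ⟨n, -, hn, rfl⟩ | hh
  · simp only [chiInterval, decide_eq_true_eq] at hhx
    omega
  · exact hh

theorem consistent_chiE_SE (d : ℕ) : Consistent (chiE d) (SE d) := by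
  intro p hp
  simp only [SE, List.mem_map, List.mem_range] at hp
  obtain ⟨i, hi, rfl⟩ := hp
  simp only [chiE, decide_eq_true_eq]
  omega

theorem length_SE (d : ℕ) : (SE d).length = d - 1 := by
  simp [SE]

theorem realizable_SE (d : ℕ) : Realizable (Hd' d) (SE d) :=
  ⟨chiE d, Or.inr rfl, consistent_chiE_SE d⟩

end IntervalClass

section StubbornLearner

variable {d : ℕ} {S pre : List (ℕ × Bool)}

def HasLargePositive (d : ℕ) (S : List (ℕ × Bool)) : Prop :=
  ∃ p ∈ S, 2 ^ d < p.1 ∧ p.2 = true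

theorem HasLargePositive.append (h : HasLargePositive d S) (T : List (ℕ × Bool)) :
    HasLargePositive d (S ++ T) :=
  let ⟨p, hp, hlarge⟩ := h
  ⟨p, List.mem_append_left T hp, hlarge⟩

theorem VS_Hd'_subset_of_hasLargePositive (h : HasLargePositive d S) :
    VS (Hd' d) S ⊆ {chiE d} := by
  obtain ⟨p, hp, hlarge, htrue⟩ := h
  exact fun g hg => eq_chiE_of_mem_Hd' hg.1 hlarge ((hg.2 p hp).trans htrue)

theorem VS_Hd'_eq_of_hasLargePositive (h : HasLargePositive d S) (hr : Realizable (Hd' d) S) :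
    VS (Hd' d) S = {chiE d} :=
  (Set.Nonempty.subset_singleton_iff hr).1 (VS_Hd'_subset_of_hasLargePositive h)

theorem hasLargePositive_of_prefix_SE (hS : S ≠ []) (h : S <+: SE d) : HasLargePositive d S := by
  have h0 : 0 < S.length := List.length_pos_iff.2 hS
  refine ⟨S[0], List.getElem_mem h0, ?_⟩
  rw [h.getElem h0]
  simp [SE]

theorem halving_Hd'_nil_of_lt {x : ℕ} (hx : 2 ^ d < x) : halving (Hd' d) [] x = false := by
  have htrue : (Restrict (Hd' d) x true).ncard ≤ 1 :=
    (Set.ncard_le_ncard (fun g hg => eq_chiE_of_mem_Hd' hg.1 hx hg.2)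
      (Set.finite_singleton _)).trans (Set.ncard_singleton _).le
  have hfalse : chiInterval 1 ∈ Restrict (Hd' d) x false :=
    ⟨Or.inl ⟨1, le_rfl, Nat.one_le_two_pow, rfl⟩, by
      have := Nat.one_le_two_pow (n := d)
      simp only [chiInterval, decide_eq_false_iff_not]
      omega⟩
  have := (Set.ncard_pos ((Hd'_finite d).subset fun _ hg => hg.1)).2 ⟨_, hfalse⟩
  simp only [halving, VS_nil, decide_eq_false_iff_not, not_lt]
  omega

noncomputable def stubbornLearner (d : ℕ) (pre : List (ℕ × Bool)) (x : ℕ) : Bool :=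
  if pre ≠ [] ∧ pre ++ [(x, true)] <+: SE d then false else halving (Hd' d) pre x

noncomputable def scriptBudget (d : ℕ) (S : List (ℕ × Bool)) : ℕ :=
  if S <+: SE d then d - 1 - S.length else 0

theorem scriptBudget_append_le (p : ℕ × Bool) :
    scriptBudget d (S ++ [p]) ≤ scriptBudget d S := by
  unfold scriptBudget
  split_ifs with h h'
  · simp only [List.length_append, List.length_singleton]
    omega
  · exact absurd ((List.prefix_append S [p]).trans h) h'
  · omega
  · exact le_rfl

theorem scriptBudget_append_add_one_le {p : ℕ × Bool} (h : S ++ [p] <+: SE d) :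
    scriptBudget d (S ++ [p]) + 1 ≤ scriptBudget d S := by
  have hlen := h.length_le
  rw [length_SE, List.length_append, List.length_singleton] at hlen
  simp only [scriptBudget, if_pos h, if_pos ((List.prefix_append S [p]).trans h),
    List.length_append, List.length_singleton]
  omega

/-- Before the first large positive example the learner halves the version space; afterwards
`χ_E` is known and every mistake shortens the remaining part of `SE d`. -/
noncomputable def stubbornPotential (d : ℕ) (S : List (ℕ × Bool)) : ℕ :=
  if HasLargePositive d S then scriptBudget d S else Nat.log 2 (VS (Hd' d) S).ncard

theorem stubbornPotential_step_of_hasLargePositive {p : ℕ × Bool}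
    (hpre : HasLargePositive d pre) (hr : Realizable (Hd' d) (pre ++ [p])) :
    (if stubbornLearner d pre p.1 ≠ p.2 then 1 else 0) + stubbornPotential d (pre ++ [p]) ≤
      stubbornPotential d pre := by
  have hVS' := VS_Hd'_eq_of_hasLargePositive (hpre.append [p]) hr
  have hp : chiE d p.1 = p.2 := (hVS' ▸ Set.mem_singleton (chiE d)).2 p (by simp)
  simp only [stubbornPotential, if_pos hpre, if_pos (hpre.append [p])]
  by_cases hscript : pre ≠ [] ∧ pre ++ [(p.1, true)] <+: SE d
  · have hp_true : p.2 = true :=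
      hp ▸ consistent_chiE_SE d (p.1, true) (hscript.2.subset (by simp))
    have hbudget := scriptBudget_append_add_one_le (d := d) (S := pre) (p := p)
      (by rw [← hp_true] at hscript; exact hscript.2)
    split_ifs <;> omega
  · have hVS := VS_Hd'_eq_of_hasLargePositive hpre hr.of_append
    rw [stubbornLearner, if_neg hscript, halving_eq_of_VS_eq_singleton hVS, hp, if_neg (by simp),
      zero_add]
    exact scriptBudget_append_le p

theorem stubbornPotential_step_of_not_hasLargePositive {p : ℕ × Bool}
    (hpre : ¬HasLargePositive d pre) (hr : Realizable (Hd' d) (pre ++ [p])) :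
    (if stubbornLearner d pre p.1 ≠ p.2 then 1 else 0) + stubbornPotential d (pre ++ [p]) ≤
      stubbornPotential d pre := by
  have hprefix : ∀ q, pre ++ [q] <+: SE d → pre = [] := fun q h => by
    by_contra hne
    exact hpre (hasLargePositive_of_prefix_SE hne ((List.prefix_append pre [q]).trans h))
  have hlearner : stubbornLearner d pre p.1 = halving (Hd' d) pre p.1 :=
    if_neg fun h => h.1 (hprefix _ h.2)
  have hhalf := halving_mistake_add_log_le (Hd'_finite d) hr
  simp only [stubbornPotential, if_neg hpre, hlearner]
  by_cases hlarge : HasLargePositive d (pre ++ [p])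
  · rw [if_pos hlarge]
    rcases eq_or_ne pre [] with rfl | hne
    · have hbudget : scriptBudget d ([] ++ [p]) ≤ d - 2 := by
        unfold scriptBudget
        split_ifs
        · simp only [List.nil_append, List.length_singleton]
          omega
        · exact Nat.zero_le _
      have hd := VS_nil (H := Hd' d) ▸ (shatters_Hd' d).le_log_ncard (Hd'_finite d)
      have hmistake : (if halving (Hd' d) [] p.1 ≠ p.2 then 1 else 0) ≤ 1 := by split <;> omega
      omega
    · have : scriptBudget d (pre ++ [p]) = 0 := if_neg fun h => hne (hprefix p h)
      omega
  · rwa [if_neg hlarge]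

theorem stubbornPotential_step (pre : List (ℕ × Bool)) (p : ℕ × Bool)
    (hr : Realizable (Hd' d) (pre ++ [p])) :
    (if stubbornLearner d pre p.1 ≠ p.2 then 1 else 0) + stubbornPotential d (pre ++ [p]) ≤
      stubbornPotential d pre := by
  by_cases hpre : HasLargePositive d pre
  · exact stubbornPotential_step_of_hasLargePositive hpre hr
  · exact stubbornPotential_step_of_not_hasLargePositive hpre hr

theorem MB_stubbornLearner (hd : 1 ≤ d) : MB (stubbornLearner d) (Hd' d) = d := by
  refine le_antisymm (MB_le fun S hS => ?_) (le_MB_of_shatters _ (shatters_Hd' d))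
  have hbound := mistakesFrom_add_le_of_potential (stubbornPotential d) stubbornPotential_step
    S [] (by simpa using hS)
  have hstart : stubbornPotential d [] = d := by
    simp [stubbornPotential, HasLargePositive, VS_nil, log_ncard_Hd' hd]
  rw [Mistakes]
  omega

theorem mistakes_stubbornLearner_SE : Mistakes (stubbornLearner d) (SE d) = d - 1 := by
  rw [Mistakes, mistakesFrom_eq_length, length_SE]
  intro k hk
  have hSEk : (SE d)[k] = (2 ^ d + k + 1, true) := by simp [SE]
  rw [List.nil_append, hSEk]
  rcases k with _ | k
  · rw [List.take_zero, stubbornLearner, if_neg (by simp),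
      halving_Hd'_nil_of_lt (x := 2 ^ d + 0 + 1) (by omega)]
    simp
  · have hnext : (SE d).take (k + 1) ++ [(2 ^ d + (k + 1) + 1, true)] = (SE d).take (k + 2) := by
      rw [← hSEk, List.take_append_getElem]
    have hne : (SE d).take (k + 1) ≠ [] := by
      rw [Ne, List.take_eq_nil_iff, ← List.length_eq_zero_iff]
      omega
    rw [stubbornLearner, if_pos ⟨hne, hnext ▸ List.take_prefix _ _⟩]
    simp

end StubbornLearner

theorem mistakes_SE_le_one_of_anytimeOptimal {d : ℕ} (hd : 2 ≤ d)
    {A : List (ℕ × Bool) → ℕ → Bool} (hA : AnytimeOptimal A (Hd' d)) : Mistakes A (SE d) ≤ 1 := by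
  have hfirst : (SE d).take 1 ≠ [] := by
    rw [Ne, List.take_eq_nil_iff, ← List.length_eq_zero_iff, length_SE]
    omega
  have hr := realizable_SE d
  rw [← List.take_append_drop 1 (SE d)] at hr ⊢
  have hopt : OptPostMB (Hd' d) ((SE d).take 1) = 0 :=
    OptPostMB_eq_zero_of_VS_subset (VS_Hd'_subset_of_hasLargePositive
      (hasLargePositive_of_prefix_SE hfirst (List.take_prefix _ _)))
  rw [mistakes_append_eq_of_PostMB_eq_zero ((hA _ hr.of_append).trans hopt) hr]
  exact (mistakesFrom_le_length [] _).trans (List.length_take_le _ _)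

/-- `Ldim(H_d') = d`, there is an optimal learner (mistake bound `d`) that
makes `d-1` mistakes on the realizable sample `((x,1))_{x∈E}`, while every anytime
optimal learner makes at most 1 mistake on it. -/
theorem stmt8 (d : ℕ) (hd : 2 < d) :
    Ldim (Hd' d) = ((d : ℕ∞) : WithBot ℕ∞) ∧
    Realizable (Hd' d) (SE d) ∧
    (∃ A : List (ℕ × Bool) → ℕ → Bool,
      MB A (Hd' d) = (d : ℕ∞) ∧ Mistakes A (SE d) = d - 1) ∧
    (∀ A : List (ℕ × Bool) → ℕ → Bool,
      AnytimeOptimal A (Hd' d) → Mistakes A (SE d) ≤ 1) :=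
  ⟨Ldim_Hd' (by omega), realizable_SE d,
    ⟨stubbornLearner d, MB_stubbornLearner (by omega), mistakes_stubbornLearner_SE⟩,
    fun _ hA => mistakes_SE_le_one_of_anytimeOptimal (by omega) hA⟩
end

section
/- For the class H^RER_halt = ∪_e {χ_{{3e}}} ∪ ∪_{e : φ_e(e)↓} {χ_{{3e,3e+1}}, χ_{{3e,3e+1,3e+2}}} over ℕ, there exists a computable online learner B with mistake bound M_B(H^RER_halt) = 2 = Ldim(H^RER_halt); i.e., H^RER_halt is optimally computably online learnable. -/
open Classical

variable {X : Type*}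

/-- The `e`-th partial computable function in the standard numbering by codes. -/
def phi (e : ℕ) : ℕ →. ℕ :=
  (Denumerable.ofNat Nat.Partrec.Code e).eval

/-- `φ_e(x)↓`. -/
def phiHalts (e x : ℕ) : Prop := (phi e x).Dom

/-- The {0,1}-valued learner induced by a two-place partial computable function:
it predicts `true` exactly when the output converges to `1`. -/
noncomputable def predOf (A : ℕ → ℕ →. ℕ) : List (ℕ × Bool) → ℕ → Bool :=
  fun S x => if 1 ∈ A (Encodable.encode S) x then true else false

/-- `A` is a computable online learner for `H`: a two-place partial computable function
converging with value in {0,1} on every (encoded `H`-realizable sample, point) pair. -/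
def IsCOnlineLearner (A : ℕ → ℕ →. ℕ) (H : Set (ℕ → Bool)) : Prop :=
  Partrec₂ A ∧
    ∀ S : List (ℕ × Bool), Realizable H S → ∀ x : ℕ,
      ∃ y ∈ A (Encodable.encode S) x, y = 0 ∨ y = 1

/-- The class `H^RER_halt = ∪_e {χ_{3e}} ∪ ∪_{e : φ_e(e)↓} {χ_{3e,3e+1}, χ_{3e,3e+1,3e+2}}`. -/
def HhaltRER : Set (ℕ → Bool) :=
  {f | ∃ e : ℕ, f = fun n => decide (n = 3 * e)} ∪
  {f | ∃ e : ℕ, phiHalts e e ∧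
    (f = (fun n => decide (n = 3 * e ∨ n = 3 * e + 1)) ∨
     f = (fun n => decide (n = 3 * e ∨ n = 3 * e + 1 ∨ n = 3 * e + 2)))}


/-! Every member of `HhaltRER` is the indicator of a nonempty initial segment `{3e, …, 3e+t}` of
a block `{3e, 3e+1, 3e+2}`. The learner remembers labelled points and otherwise predicts `true`
exactly on the first two points of a block known to contain a positive point. Each mistake
either reveals the first positive point or settles the top of the block (`3e+1` negative or
`3e+2` positive), so at most two mistakes occur, and the sample `(0, true), (1, false)` forces both.
For the Littlestone dimension, a halting index `e` gives a tree of depth 2 rooted at `3e+1`,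
whereas below any root the branch labelled `true` has at most three hypotheses, too few to be
shattered to depth 2. -/

theorem mistakesFrom_le_of_potential (A : List (X × Bool) → X → Bool) (h : X → Bool)
    (Φ : List (X × Bool) → ℕ)
    (step : ∀ pre p, Consistent h (pre ++ [p]) →
      (if A pre p.1 ≠ p.2 then 1 else 0) + Φ (pre ++ [p]) ≤ Φ pre) :
    ∀ S pre, Consistent h (pre ++ S) → MistakesFrom A pre S ≤ Φ pre := by
  intro S
  induction S with
  | nil => simp [MistakesFrom]
  | cons p rest ih =>
    intro pre hc
    have hc' : Consistent h (pre ++ [p] ++ rest) := by simpa using hc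
    calc MistakesFrom A pre (p :: rest)
        = (if A pre p.1 ≠ p.2 then 1 else 0) + MistakesFrom A (pre ++ [p]) rest := rfl
      _ ≤ (if A pre p.1 ≠ p.2 then 1 else 0) + Φ (pre ++ [p]) := by gcongr; exact ih _ hc'
      _ ≤ Φ pre := step pre p fun q hq => hc' q (List.mem_append_left _ hq)

theorem ldim_eq_of_shatters {H : Set (X → Bool)} {d : ℕ} (hd : Shatters H d)
    (hle : ∀ n, Shatters H n → n ≤ d) : Ldim H = d :=
  le_antisymm (iSup₂_le fun n hn => by exact_mod_cast hle n hn)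
    (le_iSup₂ (f := fun (n : ℕ) (_ : Shatters H n) => ((n : ℕ∞) : WithBot ℕ∞)) d hd)

theorem Shatters.two_pow_le_encard {H : Set (X → Bool)} :
    ∀ {d : ℕ}, Shatters H d → 2 ^ d ≤ H.encard
  | 0, hH => by simpa [Set.one_le_encard_iff_nonempty, Shatters] using hH
  | d + 1, ⟨x, hf, ht⟩ => by
    have hdisj : Disjoint (Restrict H x false) (Restrict H x true) :=
      Set.disjoint_left.mpr fun g hgf hgt => by simpa [hgf.2] using hgt.2
    calc (2 : ℕ∞) ^ (d + 1) = 2 ^ d + 2 ^ d := by ring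
      _ ≤ (Restrict H x false).encard + (Restrict H x true).encard :=
          add_le_add hf.two_pow_le_encard ht.two_pow_le_encard
      _ = (Restrict H x false ∪ Restrict H x true).encard := (Set.encard_union_eq hdisj).symm
      _ ≤ H.encard := Set.encard_le_encard (Set.union_subset (fun g hg => hg.1) fun g hg => hg.1)

theorem exists_phiHalts_self : ∃ e, phiHalts e e :=
  ⟨Encodable.encode Nat.Partrec.Code.zero, by
    simp [phiHalts, phi, Denumerable.ofNat_encode, Nat.Partrec.Code.eval]; trivial⟩

theorem shatters_HhaltRER_two : Shatters HhaltRER 2 := by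
  obtain ⟨e, he⟩ := exists_phiHalts_self
  refine ⟨3 * e + 1, ⟨3 * e, ?_, ?_⟩, ⟨3 * e + 2, ?_, ?_⟩⟩
  · exact ⟨_, ⟨Or.inl ⟨e + 1, rfl⟩, by simp; omega⟩, by simp⟩
  · exact ⟨_, ⟨Or.inl ⟨e, rfl⟩, by simp⟩, by simp⟩
  · exact ⟨_, ⟨Or.inr ⟨e, he, Or.inl rfl⟩, by simp⟩, by simp⟩
  · exact ⟨_, ⟨Or.inr ⟨e, he, Or.inr rfl⟩, by simp⟩, by simp⟩

theorem encard_restrict_HhaltRER_true_le (x : ℕ) : (Restrict HhaltRER x true).encard ≤ 3 := by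
  set e := x / 3
  have hsub : Restrict HhaltRER x true ⊆
      {fun n => decide (n = 3 * e), fun n => decide (n = 3 * e ∨ n = 3 * e + 1),
        fun n => decide (n = 3 * e ∨ n = 3 * e + 1 ∨ n = 3 * e + 2)} := by
    rintro f ⟨⟨e', rfl⟩ | ⟨e', -, rfl | rfl⟩, hx⟩ <;>
      simp only [decide_eq_true_eq] at hx <;> obtain rfl : e' = e := by omega
    all_goals simp
  calc (Restrict HhaltRER x true).encard ≤ _ := Set.encard_le_encard hsub
    _ ≤ _ + 1 := Set.encard_insert_le _ _
    _ ≤ (_ + 1) + 1 := by gcongr; exact Set.encard_insert_le _ _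
    _ = 3 := by rw [Set.encard_singleton]; norm_num

theorem not_shatters_HhaltRER {d : ℕ} (hd : 3 ≤ d) : ¬ Shatters HhaltRER d := by
  obtain ⟨k, rfl⟩ : ∃ k, d = k + 1 := ⟨d - 1, by omega⟩
  rintro ⟨x, -, ht⟩
  have h4 : (2 : ℕ∞) ^ 2 ≤ 2 ^ k := pow_le_pow_right₀ (by norm_num) (by omega)
  have := (h4.trans ht.two_pow_le_encard).trans (encard_restrict_HhaltRER_true_le x)
  norm_num at this

theorem ldim_HhaltRER : Ldim HhaltRER = ((2 : ℕ∞) : WithBot ℕ∞) :=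
  ldim_eq_of_shatters shatters_HhaltRER_two fun n hn => by
    by_contra! h
    exact not_shatters_HhaltRER h hn

structure IsBlockPrefix (e : ℕ) (h : ℕ → Bool) : Prop where
  base : h (3 * e) = true
  mid_of_top : h (3 * e + 2) = true → h (3 * e + 1) = true
  div_three_eq : ∀ y, h y = true → y / 3 = e

theorem exists_isBlockPrefix_of_mem {h : ℕ → Bool} (hh : h ∈ HhaltRER) :
    ∃ e, IsBlockPrefix e h := by
  rcases hh with ⟨e, rfl⟩ | ⟨e, -, rfl | rfl⟩ <;>
    exact ⟨e, by simp, by simp, fun y hy => by simp at hy; omega⟩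

def blockPredicts (S : List (ℕ × Bool)) (x : ℕ) : Prop :=
  (x, true) ∈ S ∨ (x % 3 ≠ 2 ∧ (x, false) ∉ S ∧ ∃ p ∈ S, p.2 = true ∧ p.1 / 3 = x / 3)

instance (S : List (ℕ × Bool)) (x : ℕ) : Decidable (blockPredicts S x) := by
  unfold blockPredicts; infer_instance

def blockLearner (S : List (ℕ × Bool)) (x : ℕ) : Bool :=
  decide (blockPredicts S x)

def HasPositive (S : List (ℕ × Bool)) : Prop :=
  ∃ p ∈ S, p.2 = true

def BlockResolved (e : ℕ) (S : List (ℕ × Bool)) : Prop :=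
  (3 * e + 1, false) ∈ S ∨ (3 * e + 2, true) ∈ S

theorem blockLearner_progress {e : ℕ} {h : ℕ → Bool} (hh : IsBlockPrefix e h)
    {pre : List (ℕ × Bool)} (hc : Consistent h pre) {x : ℕ} (hmiss : blockLearner pre x ≠ h x) :
    (¬ HasPositive pre ∧ HasPositive (pre ++ [(x, h x)])) ∨
      (¬ BlockResolved e pre ∧ BlockResolved e (pre ++ [(x, h x)])) := by
  have hblock : ∀ y, (y, true) ∈ pre → y / 3 = e := fun y hy => hh.div_three_eq y (hc _ hy)
  cases hx : h x with
  | true =>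
    have hpred : ¬ blockPredicts pre x := by simpa [blockLearner, hx] using hmiss
    by_cases hpos : HasPositive pre
    · obtain ⟨⟨y, b⟩, hy, rfl, -⟩ := hpos
      have hxe : x / 3 = e := hh.div_three_eq x hx
      have hxf : (x, false) ∉ pre := fun hmem => by simpa [hx] using hc _ hmem
      have hx2 : x = 3 * e + 2 := by
        by_contra hne
        exact hpred (Or.inr ⟨by omega, hxf, (y, true), hy, rfl, by rw [hblock y hy, hxe]⟩)
      subst hx2
      refine Or.inr ⟨?_, Or.inr (by simp)⟩
      rintro (hmem | hmem)
      · simpa [hh.mid_of_top hx] using hc _ hmem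
      · exact hpred (Or.inl hmem)
    · exact Or.inl ⟨hpos, _, List.mem_append_right _ (List.mem_singleton_self _), rfl⟩
  | false =>
    have hpred : blockPredicts pre x := by simpa [blockLearner, hx] using hmiss
    rcases hpred with hmem | ⟨hx2, hxf, ⟨y, b⟩, hy, rfl, hyx⟩
    · simpa [hx] using hc _ hmem
    have hx1 : x = 3 * e + 1 := by
      have := hblock y hy
      have : x ≠ 3 * e := fun h3 => by simp [h3, hh.base] at hx
      omega
    subst hx1
    refine Or.inr ⟨?_, Or.inl (by simp)⟩
    rintro (hmem | hmem)
    · exact hxf hmem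
    · simpa [hx] using hh.mid_of_top (hc _ hmem)

noncomputable def blockPotential (e : ℕ) (S : List (ℕ × Bool)) : ℕ :=
  (if HasPositive S then 0 else 1) + (if BlockResolved e S then 0 else 1)

theorem blockPotential_step {e : ℕ} {h : ℕ → Bool} (hh : IsBlockPrefix e h)
    (pre : List (ℕ × Bool)) (p : ℕ × Bool) (hc : Consistent h (pre ++ [p])) :
    (if blockLearner pre p.1 ≠ p.2 then 1 else 0) + blockPotential e (pre ++ [p]) ≤
      blockPotential e pre := by
  obtain ⟨x, b⟩ := p
  obtain rfl : h x = b := hc (x, b) (by simp)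
  have hpos : HasPositive pre → HasPositive (pre ++ [(x, h x)]) :=
    fun ⟨q, hq, hq2⟩ => ⟨q, List.mem_append_left _ hq, hq2⟩
  have hres : BlockResolved e pre → BlockResolved e (pre ++ [(x, h x)]) :=
    Or.imp (List.mem_append_left _) (List.mem_append_left _)
  unfold blockPotential
  by_cases hmiss : blockLearner pre x ≠ h x
  · rcases blockLearner_progress hh (fun q hq => hc q (List.mem_append_left _ hq)) hmiss with
      ⟨hn, hy⟩ | ⟨hn, hy⟩ <;> split_ifs <;> simp_all
  · split_ifs <;> simp_all

theorem mistakes_blockLearner_le_two {e : ℕ} {h : ℕ → Bool} (hh : IsBlockPrefix e h)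
    {S : List (ℕ × Bool)} (hc : Consistent h S) : Mistakes blockLearner S ≤ 2 :=
  calc Mistakes blockLearner S ≤ blockPotential e [] :=
        mistakesFrom_le_of_potential _ h _ (blockPotential_step hh) S [] (by simpa using hc)
    _ ≤ 2 := by unfold blockPotential; split_ifs <;> simp

theorem mistakes_blockLearner_zero_one : Mistakes blockLearner [(0, true), (1, false)] = 2 := by
  simp [Mistakes, MistakesFrom, blockLearner, blockPredicts]

theorem MB_eq_of_forall_le_of_exists {A : List (X × Bool) → X → Bool} {H : Set (X → Bool)}
    {n : ℕ} (hle : ∀ S, Realizable H S → Mistakes A S ≤ n)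
    (hex : ∃ S, Realizable H S ∧ Mistakes A S = n) : MB A H = n := by
  obtain ⟨S, hS, hSn⟩ := hex
  refine le_antisymm (iSup₂_le fun S hS => by exact_mod_cast hle S hS) ?_
  exact hSn ▸ le_iSup₂ (f := fun S (_ : Realizable H S) => (Mistakes A S : ℕ∞)) S hS

theorem MB_blockLearner : MB blockLearner HhaltRER = 2 := by
  refine MB_eq_of_forall_le_of_exists (n := 2) (fun S ⟨h, hh, hc⟩ => ?_) ?_
  · obtain ⟨e, he⟩ := exists_isBlockPrefix_of_mem hh
    exact mistakes_blockLearner_le_two he hc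
  · refine ⟨_, ⟨_, Or.inl ⟨0, rfl⟩, ?_⟩, mistakes_blockLearner_zero_one⟩
    simp [Consistent]

theorem primrecRel_blockPredicts : PrimrecRel blockPredicts := by
  open Primrec in
  have mem : PrimrecRel fun (S : List (ℕ × Bool)) (q : ℕ × Bool) => q ∈ S :=
    (PrimrecRel.exists_mem_list Primrec.eq).of_eq fun S q => by simp
  have memLabel (b : Bool) : PrimrecRel fun (S : List (ℕ × Bool)) (x : ℕ) => (x, b) ∈ S :=
    mem.comp fst (pair snd (const b))
  have sameBlock : PrimrecRel fun (p : ℕ × Bool) (x : ℕ) => p.2 = true ∧ p.1 / 3 = x / 3 :=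
    (Primrec.eq.comp (snd.comp fst) (const true)).and
      (Primrec.eq.comp (nat_div.comp (fst.comp fst) (const 3)) (nat_div.comp snd (const 3)))
  exact (memLabel true).or <| (Primrec.eq.comp (nat_mod.comp snd (const 3)) (const 2)).not.and <|
    (memLabel false).not.and sameBlock.exists_mem_list

def blockLearnerCode : ℕ → ℕ →. ℕ := fun c x =>
  Part.some (if blockPredicts ((Encodable.decode c).getD []) x then 1 else 0)

theorem partrec₂_blockLearnerCode : Partrec₂ blockLearnerCode := by
  open Primrec in
  have hdecode : Primrec fun c : ℕ => (Encodable.decode (α := List (ℕ × Bool)) c).getD [] :=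
    option_getD.comp Primrec.decode (const [])
  have hvalue : Primrec₂ fun c x =>
      if blockPredicts ((Encodable.decode c).getD []) x then 1 else 0 :=
    Primrec.ite (primrecRel_blockPredicts.comp (hdecode.comp fst) snd) (const 1) (const 0)
  exact hvalue.to_comp.partrec₂

theorem predOf_blockLearnerCode : predOf blockLearnerCode = blockLearner := by
  funext S x
  by_cases hS : blockPredicts S x <;> simp [predOf, blockLearnerCode, blockLearner, hS]

theorem isCOnlineLearner_blockLearnerCode (H : Set (ℕ → Bool)) :
    IsCOnlineLearner blockLearnerCode H :=
  ⟨partrec₂_blockLearnerCode, fun S _ x => ⟨_, Part.mem_some _, by split_ifs <;> simp⟩⟩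

/-- `Ldim(H^RER_halt) = 2` and there is a computable online learner for
`H^RER_halt` whose mistake bound is exactly 2; i.e. the class is optimally computably
online learnable. -/
theorem stmt19 :
    Ldim HhaltRER = ((2 : ℕ∞) : WithBot ℕ∞) ∧
    ∃ B : ℕ → ℕ →. ℕ,
      IsCOnlineLearner B HhaltRER ∧ MB (predOf B) HhaltRER = (2 : ℕ∞) :=
  ⟨ldim_HhaltRER, blockLearnerCode, isCOnlineLearner_blockLearnerCode HhaltRER,
    predOf_blockLearnerCode ▸ MB_blockLearner⟩
end
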